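/- For every n ∈ ℕ there exists a polynomial P_n ∈ ℂ[X,Y] of total degree n such that z^{(n)}(z) = P_n(Re z, Im z) for all z ∈ Λ, each z^{(n)} is discrete analytic, and the family {z^{(n)} : n ∈ ℕ} is linearly independent over ℂ as functions on Λ. -/

import Mathlib

/-!
Along the canonical path, `Z` has explicit increments: `Zf(z+1) - Zf(z) = f(z)` on the real
axis and `Zf(z+i) - Zf(z) = ((1+i) f(z) + (i-1) f(z+i))/2` everywhere; together with
`Zf(0) = 0` they determine `Zf`. For discrete analytic `f` the horizontal formula then holds
off the axis as well, and the two formulas make `Zf` discrete analytic.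

The same characterisation shows that `Z` maps the binomial products
`(Re z choose j) (Im z choose k)` into the span of those with `j + k` one larger, so `z⁽ⁿ⁾` is a
polynomial of total degree at most `n`. On the real axis `z⁽ⁿ⁾(m) = (m choose n)`: this forces
the degree to be exactly `n`, and makes the family triangular, hence linearly independent.
-/

open Complex Finset GaussianInt

noncomputable section

/-- The lattice point `i` in the Gaussian integers. -/
def ii : GaussianInt := ⟨0, 1⟩

/-- `f` is discrete analytic on the whole lattice `Λ = ℤ + iℤ`. -/
def DAnalytic (f : GaussianInt → ℂ) : Prop :=
  ∀ z : GaussianInt,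
    (f (z + 1 + ii) - f z) / (1 + Complex.I) = (f (z + 1) - f (z + ii)) / (1 - Complex.I)

/-- `f` is discrete analytic on the right half lattice `Λ₊ = {z : Re z ≥ 0}`. -/
def DAnalyticOn (f : GaussianInt → ℂ) : Prop :=
  ∀ z : GaussianInt, 0 ≤ z.re →
    (f (z + 1 + ii) - f z) / (1 + Complex.I) = (f (z + 1) - f (z + ii)) / (1 - Complex.I)

/-- `γ 0, γ 1, …, γ n` is a path in the lattice from `a` to `b`:
consecutive points are at distance `1`. -/
def IsPath (γ : ℕ → GaussianInt) (n : ℕ) (a b : GaussianInt) : Prop :=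
  γ 0 = a ∧ γ n = b ∧ ∀ k < n, ‖(γ (k + 1) : ℂ) - (γ k : ℂ)‖ = 1

/-- The discrete integral `∫_γ f δz` along the path `γ 0, …, γ n`. -/
def discInt (f : GaussianInt → ℂ) (γ : ℕ → GaussianInt) (n : ℕ) : ℂ :=
  ∑ k ∈ Finset.range n, ((f (γ k) + f (γ (k + 1))) / 2) * ((γ (k + 1) : ℂ) - (γ k : ℂ))

/-- The canonical lattice path from `0` to `z`: first along the real axis, then vertically. -/
def cpath (z : GaussianInt) (k : ℕ) : GaussianInt :=
  ⟨z.re.sign * ((min k z.re.natAbs : ℕ) : ℤ),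
   z.im.sign * ((min k (z.re.natAbs + z.im.natAbs) - z.re.natAbs : ℕ) : ℤ)⟩

/-- The length of the canonical path from `0` to `z`. -/
def cpathLen (z : GaussianInt) : ℕ := z.re.natAbs + z.im.natAbs

/-- The operator `Z`: `Zf(z) = (f(0) - f(z))/2 + ∫_0^z f δz`, the integral being taken
along the canonical path (for discrete analytic `f` the integral is path-independent). -/
def Zop (f : GaussianInt → ℂ) : GaussianInt → ℂ := fun z =>
  (f 0 - f z) / 2 + discInt f (cpath z) (cpathLen z)

/-- The basic discrete analytic polynomials `z⁽ⁿ⁾ = Zⁿ1`. -/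
def zpoly (n : ℕ) : GaussianInt → ℂ := Zop^[n] (fun _ => 1)

/-- `α₊ = (1+i)/2`. -/
def aPlus : ℂ := (1 + Complex.I) / 2
/-- `α₋ = (1-i)/2`. -/
def aMinus : ℂ := (1 - Complex.I) / 2

/-- The difference operator `δx`. -/
def dxOp (f : GaussianInt → ℂ) : GaussianInt → ℂ := fun z => f (z + 1) - f z
/-- The difference operator `δy`. -/
def dyOp (f : GaussianInt → ℂ) : GaussianInt → ℂ := fun z => f (z + ii) - f z

/-- `f` belongs to the Hardy space `H₂(Λ₊)` with coefficient sequence `c`: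
`f(z) = Σ c(n) z⁽ⁿ⁾(z)` on `Λ₊` and `Σ |c(n)|² < ∞`. -/
def MemH2 (f : GaussianInt → ℂ) (c : ℕ → ℂ) : Prop :=
  Summable (fun n => ‖c n‖ ^ 2) ∧
  ∀ z : GaussianInt, 0 ≤ z.re → HasSum (fun n => c n * zpoly n z) (f z)

lemma Int.sign_mul_min_natAbs (a : ℤ) (k : ℕ) :
    a.sign * ((min k a.natAbs : ℕ) : ℤ) = max (-(k : ℤ)) (min (k : ℤ) a) := by
  rcases lt_trichotomy a 0 with h | rfl | h
  · rw [Int.sign_eq_neg_one_of_neg h]; omega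
  · simp
  · rw [Int.sign_eq_one_of_pos h]; omega

lemma cpath_eq (z : GaussianInt) (k : ℕ) :
    cpath z k = ⟨max (-(k : ℤ)) (min (k : ℤ) z.re),
      max (-((k - z.re.natAbs : ℕ) : ℤ)) (min ((k - z.re.natAbs : ℕ) : ℤ) z.im)⟩ := by
  rw [cpath, Int.sign_mul_min_natAbs, ← Int.sign_mul_min_natAbs z.im]
  congr 3
  omega

lemma cpath_cpathLen (z : GaussianInt) : cpath z (cpathLen z) = z := by
  ext <;> simp only [cpath_eq, cpathLen] <;> omega

def PathExtends (z z' : GaussianInt) : Prop :=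
  cpathLen z' = cpathLen z + 1 ∧ ∀ k ≤ cpathLen z, cpath z' k = cpath z k

lemma pathExtends_re (a : ℤ) :
    PathExtends ⟨a, 0⟩ ⟨a + 1, 0⟩ ∨ PathExtends ⟨a + 1, 0⟩ ⟨a, 0⟩ := by
  simp only [PathExtends, cpathLen, cpath_eq, Zsqrtd.ext_iff]
  rcases le_or_gt 0 a with h | h
  · exact Or.inl ⟨by omega, fun k hk => by omega⟩
  · exact Or.inr ⟨by omega, fun k hk => by omega⟩

lemma pathExtends_im (a b : ℤ) :
    PathExtends ⟨a, b⟩ ⟨a, b + 1⟩ ∨ PathExtends ⟨a, b + 1⟩ ⟨a, b⟩ := by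
  simp only [PathExtends, cpathLen, cpath_eq, Zsqrtd.ext_iff, true_and]
  rcases le_or_gt 0 b with h | h
  · exact Or.inl ⟨by omega, fun k hk => by omega⟩
  · exact Or.inr ⟨by omega, fun k hk => by omega⟩

lemma Zop_sub_of_pathExtends (f : GaussianInt → ℂ) {z z' : GaussianInt} (h : PathExtends z z') :
    Zop f z' - Zop f z = (f z - f z') / 2 + (f z + f z') / 2 * (z' - z) := by
  obtain ⟨hlen, hpre⟩ := h
  have hint : discInt f (cpath z') (cpathLen z) = discInt f (cpath z) (cpathLen z) :=
    Finset.sum_congr rfl fun k hk => by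
      rw [Finset.mem_range] at hk
      rw [hpre k hk.le, hpre (k + 1) hk]
  have hlast : cpath z' (cpathLen z) = z := (hpre _ le_rfl).trans (cpath_cpathLen z)
  have hend : cpath z' (cpathLen z + 1) = z' := hlen ▸ cpath_cpathLen z'
  rw [Zop, Zop, hlen, discInt, Finset.sum_range_succ, ← discInt, hint, hlast, hend]
  ring

lemma Zop_sub_of_pathExtends_or (f : GaussianInt → ℂ) {z z' : GaussianInt}
    (h : PathExtends z z' ∨ PathExtends z' z) :
    Zop f z' - Zop f z = (f z - f z') / 2 + (f z + f z') / 2 * (z' - z) := by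
  rcases h with h | h
  · exact Zop_sub_of_pathExtends f h
  · linear_combination -Zop_sub_of_pathExtends f h

lemma Zop_re_succ (f : GaussianInt → ℂ) (a : ℤ) :
    Zop f ⟨a + 1, 0⟩ - Zop f ⟨a, 0⟩ = f ⟨a, 0⟩ := by
  rw [Zop_sub_of_pathExtends_or f (pathExtends_re a), GaussianInt.toComplex_def',
    GaussianInt.toComplex_def']
  push_cast
  ring

lemma Zop_im_succ (f : GaussianInt → ℂ) (a b : ℤ) :
    Zop f ⟨a, b + 1⟩ - Zop f ⟨a, b⟩ = ((1 + I) * f ⟨a, b⟩ + (I - 1) * f ⟨a, b + 1⟩) / 2 := by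
  rw [Zop_sub_of_pathExtends_or f (pathExtends_im a b), GaussianInt.toComplex_def',
    GaussianInt.toComplex_def']
  push_cast
  ring

lemma Zop_apply_zero (f : GaussianInt → ℂ) : Zop f 0 = 0 := by
  simp [Zop, discInt, cpathLen]

lemma Function.Periodic.eq_apply_zero {α : Type*} {g : ℤ → α} (h : Function.Periodic g 1)
    (n : ℤ) : g n = g 0 := by
  simpa using h.int_mul_eq n

lemma GaussianInt.funext_of_increments {g h : GaussianInt → ℂ} (h0 : g 0 = h 0)
    (hre : ∀ a : ℤ, g ⟨a + 1, 0⟩ - g ⟨a, 0⟩ = h ⟨a + 1, 0⟩ - h ⟨a, 0⟩)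
    (him : ∀ a b : ℤ, g ⟨a, b + 1⟩ - g ⟨a, b⟩ = h ⟨a, b + 1⟩ - h ⟨a, b⟩) : g = h := by
  have hre' : Function.Periodic (fun a : ℤ => g ⟨a, 0⟩ - h ⟨a, 0⟩) 1 := fun a => by
    linear_combination hre a
  have him' (a : ℤ) : Function.Periodic (fun b : ℤ => g ⟨a, b⟩ - h ⟨a, b⟩) 1 := fun b => by
    linear_combination him a b
  funext ⟨a, b⟩
  have := ((him' a).eq_apply_zero b).trans (hre'.eq_apply_zero a)
  exact sub_eq_zero.mp (this.trans (sub_eq_zero.mpr h0))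

lemma Zop_eq_of_increments (f g : GaussianInt → ℂ) (h0 : g 0 = 0)
    (hre : ∀ a : ℤ, g ⟨a + 1, 0⟩ - g ⟨a, 0⟩ = f ⟨a, 0⟩)
    (him : ∀ a b : ℤ,
      g ⟨a, b + 1⟩ - g ⟨a, b⟩ = ((1 + I) * f ⟨a, b⟩ + (I - 1) * f ⟨a, b + 1⟩) / 2) :
    Zop f = g :=
  GaussianInt.funext_of_increments ((Zop_apply_zero f).trans h0.symm)
    (fun a => (Zop_re_succ f a).trans (hre a).symm)
    (fun a b => (Zop_im_succ f a b).trans (him a b).symm)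

lemma GaussianInt.mk_add_one (a b : ℤ) : (⟨a, b⟩ + 1 : GaussianInt) = ⟨a + 1, b⟩ := by
  ext <;> simp

lemma GaussianInt.mk_add_ii (a b : ℤ) : (⟨a, b⟩ + ii : GaussianInt) = ⟨a, b + 1⟩ := by
  ext <;> simp [ii]

lemma dAnalytic_iff (f : GaussianInt → ℂ) :
    DAnalytic f ↔
      ∀ a b : ℤ, f ⟨a + 1, b + 1⟩ = f ⟨a, b⟩ + I * f ⟨a + 1, b⟩ - I * f ⟨a, b + 1⟩ := by
  have h1 : (1 + I) ≠ 0 := by simp [Complex.ext_iff]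
  have h2 : (1 - I) ≠ 0 := by simp [Complex.ext_iff]
  refine ⟨fun hf a b => ?_, fun hf ⟨a, b⟩ => ?_⟩
  · have h := hf ⟨a, b⟩
    rw [GaussianInt.mk_add_one, GaussianInt.mk_add_ii, GaussianInt.mk_add_ii,
      div_eq_div_iff h1 h2] at h
    linear_combination (1 + I) / 2 * h + (f ⟨a + 1, b + 1⟩ - f ⟨a, b⟩ + f ⟨a + 1, b⟩
      - f ⟨a, b + 1⟩) / 2 * I_sq
  · rw [GaussianInt.mk_add_one, GaussianInt.mk_add_ii, GaussianInt.mk_add_ii,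
      div_eq_div_iff h1 h2]
    linear_combination (1 - I) * hf a b - (f ⟨a + 1, b⟩ - f ⟨a, b + 1⟩) * I_sq

lemma Zop_re_succ_of_dAnalytic {f : GaussianInt → ℂ} (hf : DAnalytic f) (a b : ℤ) :
    Zop f ⟨a + 1, b⟩ - Zop f ⟨a, b⟩ = f ⟨a, b⟩ := by
  have hper : Function.Periodic (fun b : ℤ => Zop f ⟨a + 1, b⟩ - Zop f ⟨a, b⟩ - f ⟨a, b⟩) 1 :=
    fun c => by
      linear_combination Zop_im_succ f (a + 1) c - Zop_im_succ f a c
        + (I - 1) / 2 * (dAnalytic_iff f).mp hf a c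
        + (f ⟨a + 1, c⟩ - f ⟨a, c + 1⟩) / 2 * I_sq
  have := hper.eq_apply_zero b
  simp only [Zop_re_succ, sub_self] at this
  exact sub_eq_zero.mp this

lemma DAnalytic.Zop {f : GaussianInt → ℂ} (hf : DAnalytic f) : DAnalytic (Zop f) := by
  refine (dAnalytic_iff _).mpr fun a b => ?_
  linear_combination Zop_re_succ_of_dAnalytic hf a (b + 1) - I * Zop_re_succ_of_dAnalytic hf a b
    + (1 + I) * Zop_im_succ f a b + (f ⟨a, b⟩ + f ⟨a, b + 1⟩) / 2 * I_sq

lemma zpoly_succ (n : ℕ) : zpoly (n + 1) = Zop (zpoly n) :=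
  Function.iterate_succ_apply' Zop n _

lemma dAnalytic_zpoly (n : ℕ) : DAnalytic (zpoly n) := by
  induction n with
  | zero => intro z; simp [zpoly]
  | succ n ih => rw [zpoly_succ]; exact ih.Zop

open Polynomial in
def binomPolynomial (n : ℕ) : ℂ[X] := C (n.factorial : ℂ)⁻¹ * descPochhammer ℂ n

lemma eval_binomPolynomial (n : ℕ) (a : ℂ) : (binomPolynomial n).eval a = Ring.choose a n := by
  rw [Ring.choose_eq_smul, binomPolynomial, Polynomial.eval_mul, Polynomial.eval_C, smul_eq_mul,
    ← Polynomial.aeval_eq_smeval, ← descPochhammer_map (Int.castRingHom ℂ), Polynomial.eval_map,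
    Polynomial.aeval_def]
  rfl

lemma natDegree_binomPolynomial (n : ℕ) : (binomPolynomial n).natDegree = n := by
  rw [binomPolynomial, Polynomial.natDegree_C_mul (by simp [Nat.factorial_ne_zero]),
    descPochhammer_natDegree]

open Polynomial in
lemma Polynomial.totalDegree_toMvPolynomial_le {R σ : Type*} [CommSemiring R] (p : R[X])
    (i : σ) :
    (p.toMvPolynomial i).totalDegree ≤ p.natDegree := by
  conv_lhs => rw [p.as_sum_range_C_mul_X_pow]
  rw [map_sum]
  refine (MvPolynomial.totalDegree_finsetSum _ _).trans (Finset.sup_le fun k hk => ?_)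
  rw [map_mul, map_pow, toMvPolynomial_C, toMvPolynomial_X, MvPolynomial.C_mul_X_pow_eq_monomial]
  refine (MvPolynomial.totalDegree_monomial_le _ _).trans ?_
  rw [Finsupp.sum_single_index rfl]
  exact Nat.le_of_lt_succ (Finset.mem_range.mp hk)

lemma Ring.choose_intCast_succ_sub (a : ℤ) (j : ℕ) :
    Ring.choose ((a + 1 : ℤ) : ℂ) (j + 1) - Ring.choose (a : ℂ) (j + 1)
      = Ring.choose (a : ℂ) j := by
  rw [Int.cast_add, Int.cast_one, Ring.choose_succ_succ]
  ring

def binomFn (j k : ℕ) : GaussianInt → ℂ := fun z =>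
  Ring.choose (z.re : ℂ) j * Ring.choose (z.im : ℂ) k

lemma Zop_binomFn (j k : ℕ) :
    Zop (binomFn j k) = Ring.choose (0 : ℂ) k • binomFn (j + 1) 0 + I • binomFn j (k + 1)
      + ((I - 1) / 2) • (binomFn j k - Ring.choose (0 : ℂ) k • binomFn j 0) := by
  -- `Ring.choose 0 k` (`1` if `k = 0`, else `0`) is the second factor on the real axis.
  refine Zop_eq_of_increments _ _ ?_ (fun a => ?_) (fun a b => ?_)
  · simp [binomFn, mul_comm]
  · simp only [binomFn, Pi.add_apply, Pi.smul_apply, Pi.sub_apply, smul_eq_mul,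
      Int.cast_zero, Ring.choose_zero_succ, Ring.choose_zero_right]
    linear_combination Ring.choose (0 : ℂ) k * Ring.choose_intCast_succ_sub a j
  · simp only [binomFn, Pi.add_apply, Pi.smul_apply, Pi.sub_apply, smul_eq_mul,
      Ring.choose_zero_right]
    linear_combination (I * Ring.choose (a : ℂ) j) * Ring.choose_intCast_succ_sub b k

def binomSpan (n : ℕ) : Submodule ℂ (GaussianInt → ℂ) :=
  Submodule.span ℂ {f | ∃ j k, j + k ≤ n ∧ binomFn j k = f}

lemma binomFn_mem_binomSpan {j k n : ℕ} (h : j + k ≤ n) : binomFn j k ∈ binomSpan n :=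
  Submodule.subset_span ⟨j, k, h, rfl⟩

lemma discInt_add (f g : GaussianInt → ℂ) (γ : ℕ → GaussianInt) (n : ℕ) :
    discInt (f + g) γ n = discInt f γ n + discInt g γ n := by
  rw [discInt, discInt, discInt, ← Finset.sum_add_distrib]
  exact Finset.sum_congr rfl fun _ _ => by simp only [Pi.add_apply]; ring

lemma discInt_smul (c : ℂ) (f : GaussianInt → ℂ) (γ : ℕ → GaussianInt) (n : ℕ) :
    discInt (c • f) γ n = c * discInt f γ n := by
  rw [discInt, discInt, Finset.mul_sum]
  exact Finset.sum_congr rfl fun _ _ => by simp only [Pi.smul_apply, smul_eq_mul]; ring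

def zopLinearMap : (GaussianInt → ℂ) →ₗ[ℂ] GaussianInt → ℂ where
  toFun := Zop
  map_add' f g := funext fun z => by
    simp only [Zop, discInt_add, Pi.add_apply]
    ring
  map_smul' c f := funext fun z => by
    simp only [Zop, discInt_smul, Pi.smul_apply, smul_eq_mul, RingHom.id_apply]
    ring

lemma Zop_mem_binomSpan {f : GaussianInt → ℂ} {n : ℕ} (hf : f ∈ binomSpan n) :
    Zop f ∈ binomSpan (n + 1) := by
  suffices binomSpan n ≤ (binomSpan (n + 1)).comap zopLinearMap from this hf
  refine Submodule.span_le.mpr ?_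
  rintro _ ⟨j, k, hjk, rfl⟩
  change Zop (binomFn j k) ∈ binomSpan (n + 1)
  rw [Zop_binomFn]
  have mem {j' k' : ℕ} (h : j' + k' ≤ n + 1) (c : ℂ) : c • binomFn j' k' ∈ binomSpan (n + 1) :=
    Submodule.smul_mem _ _ (binomFn_mem_binomSpan h)
  exact add_mem (add_mem (mem (by omega) _) (mem (by omega) _))
    (Submodule.smul_mem _ _ (sub_mem (binomFn_mem_binomSpan (by omega)) (mem (by omega) _)))

lemma zpoly_mem_binomSpan (n : ℕ) : zpoly n ∈ binomSpan n := by
  induction n with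
  | zero =>
    convert binomFn_mem_binomSpan (le_refl (0 + 0))
    funext z
    simp [zpoly, binomFn]
  | succ n ih => rw [zpoly_succ]; exact Zop_mem_binomSpan ih

def latticeEval : MvPolynomial (Fin 2) ℂ →ₗ[ℂ] GaussianInt → ℂ :=
  LinearMap.pi fun z =>
    (MvPolynomial.aeval fun j : Fin 2 =>
      if j = 0 then ((z.re : ℤ) : ℂ) else ((z.im : ℤ) : ℂ)).toLinearMap

lemma latticeEval_apply (P : MvPolynomial (Fin 2) ℂ) (z : GaussianInt) :
    latticeEval P z = MvPolynomial.eval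
      (fun j : Fin 2 => if j = 0 then ((z.re : ℤ) : ℂ) else ((z.im : ℤ) : ℂ)) P :=
  rfl

def polyFns (n : ℕ) : Submodule ℂ (GaussianInt → ℂ) :=
  (MvPolynomial.restrictTotalDegree (Fin 2) ℂ n).map latticeEval

lemma polyFns_mono : Monotone polyFns := fun _ _ h =>
  Submodule.map_mono fun _ hP => (MvPolynomial.mem_restrictTotalDegree _ _ _).mpr
    (((MvPolynomial.mem_restrictTotalDegree _ _ _).mp hP).trans h)

lemma binomFn_mem_polyFns (j k : ℕ) : binomFn j k ∈ polyFns (j + k) := by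
  refine ⟨(binomPolynomial j).toMvPolynomial 0 * (binomPolynomial k).toMvPolynomial 1, ?_, ?_⟩
  · rw [SetLike.mem_coe, MvPolynomial.mem_restrictTotalDegree]
    refine (MvPolynomial.totalDegree_mul _ _).trans ?_
    have hj := (binomPolynomial j).totalDegree_toMvPolynomial_le (0 : Fin 2)
    have hk := (binomPolynomial k).totalDegree_toMvPolynomial_le (1 : Fin 2)
    rw [natDegree_binomPolynomial] at hj hk
    omega
  · funext z
    simp [latticeEval_apply, binomFn, eval_binomPolynomial]

lemma binomSpan_le_polyFns (n : ℕ) : binomSpan n ≤ polyFns n :=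
  Submodule.span_le.mpr fun _ ⟨j, k, h, hf⟩ => hf ▸ polyFns_mono h (binomFn_mem_polyFns j k)

lemma zpoly_apply_re (n : ℕ) (a : ℤ) : zpoly n ⟨a, 0⟩ = Ring.choose (a : ℂ) n := by
  induction n generalizing a with
  | zero => simp [zpoly]
  | succ n ih =>
    rw [zpoly_succ]
    have hper : Function.Periodic
        (fun a : ℤ => Zop (zpoly n) ⟨a, 0⟩ - Ring.choose (a : ℂ) (n + 1)) 1 := fun a => by
      linear_combination Zop_re_succ (zpoly n) a - Ring.choose_intCast_succ_sub a n + ih a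
    have := hper.eq_apply_zero a
    rw [Int.cast_zero, Ring.choose_zero_succ, sub_zero] at this
    exact sub_eq_zero.mp (this.trans (Zop_apply_zero (zpoly n)))

lemma linearIndependent_of_apply_eq_zero_of_lt {K X : Type*} [Field K] (v : ℕ → X → K)
    (x : ℕ → X) (hlt : ∀ i j, j < i → v i (x j) = 0) (hdiag : ∀ i, v i (x i) ≠ 0) :
    LinearIndependent K v := by
  rw [linearIndependent_iff']
  intro s g hsum i
  induction i using Nat.strong_induction_on with
  | _ i ih =>
    intro hi
    have hv := congrFun hsum (x i)
    simp only [Finset.sum_apply, Pi.smul_apply, smul_eq_mul, Pi.zero_apply] at hv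
    rw [Finset.sum_eq_single i (fun j hj hji => ?_) (absurd hi)] at hv
    · exact (mul_eq_zero.mp hv).resolve_right (hdiag i)
    · rcases hji.lt_or_gt with h | h
      · rw [ih j h hj, zero_mul]
      · rw [hlt j i h, mul_zero]

lemma linearIndependent_zpoly : LinearIndependent ℂ zpoly := by
  refine linearIndependent_of_apply_eq_zero_of_lt zpoly (fun m => ⟨m, 0⟩) (fun i j h => ?_)
    fun i => ?_
  all_goals simp only [zpoly_apply_re, Int.cast_natCast, Ring.choose_natCast]
  · exact_mod_cast Nat.choose_eq_zero_of_lt h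
  · simp

lemma MvPolynomial.natDegree_le_totalDegree_of_eval_cons {K : Type*} [Field K] {m : ℕ}
    (P : MvPolynomial (Fin (m + 1)) K) (s : Fin m → K) (p : Polynomial K) {S : Set K}
    (hS : S.Infinite) (h : ∀ y ∈ S, eval (Fin.cons y s) P = p.eval y) :
    p.natDegree ≤ P.totalDegree := by
  have hp : (finSuccEquiv K m P).map (eval s) = p :=
    Polynomial.eq_of_infinite_eval_eq _ _ <| hS.mono fun y hy => by
      rw [Set.mem_ofPred_eq, ← eval_eq_eval_mv_eval', h y hy]
  calc p.natDegree ≤ (finSuccEquiv K m P).natDegree := hp ▸ Polynomial.natDegree_map_le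
    _ = P.degreeOf 0 := natDegree_finSuccEquiv P
    _ ≤ P.totalDegree := degreeOf_le_totalDegree P 0

lemma le_totalDegree_of_latticeEval_eq_zpoly {P : MvPolynomial (Fin 2) ℂ} {n : ℕ}
    (h : latticeEval P = zpoly n) : n ≤ P.totalDegree := by
  refine natDegree_binomPolynomial n ▸ P.natDegree_le_totalDegree_of_eval_cons ![0] _
    (Set.infinite_range_of_injective Int.cast_injective) ?_
  rintro _ ⟨a, rfl⟩
  rw [eval_binomPolynomial, ← zpoly_apply_re, ← h, latticeEval_apply]
  congr 2
  funext j
  fin_cases j <;> simp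

/-- Each `z⁽ⁿ⁾ = Zⁿ1` is given on `Λ` by a polynomial of total degree `n`
in `(Re z, Im z)`, each `z⁽ⁿ⁾` is discrete analytic, and the family `{z⁽ⁿ⁾ : n ∈ ℕ}` is
linearly independent over `ℂ`. -/
theorem stmt6 :
    (∀ n : ℕ, ∃ P : MvPolynomial (Fin 2) ℂ, P.totalDegree = n ∧
      ∀ z : GaussianInt,
        zpoly n z
          = MvPolynomial.eval (fun j : Fin 2 => if j = 0 then ((z.re : ℤ) : ℂ) else ((z.im : ℤ) : ℂ)) P) ∧
    (∀ n : ℕ, DAnalytic (zpoly n)) ∧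
    LinearIndependent ℂ (zpoly : ℕ → GaussianInt → ℂ) := by
  refine ⟨fun n => ?_, dAnalytic_zpoly, linearIndependent_zpoly⟩
  obtain ⟨P, hdeg, hP⟩ := binomSpan_le_polyFns n (zpoly_mem_binomSpan n)
  rw [SetLike.mem_coe, MvPolynomial.mem_restrictTotalDegree] at hdeg
  exact ⟨P, hdeg.antisymm (le_totalDegree_of_latticeEval_eq_zpoly hP),
    fun z => (congrFun hP z).symm⟩

end
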